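/- If the channel quality offsets are generic, then the social welfare optimization problem SWO has a unique optimal demand matrix: there is exactly one feasible demand matrix q* maximizing u(q) = ∑_{i=1}^I u_i(x_i(q)) over feasible demand matrices. -/

import Mathlib

/-- A demand matrix is feasible if it is componentwise nonnegative and the
demand to each provider equals its supply. -/
def Feasible {I J : ℕ} (Q : Fin J → ℝ) (q : Fin I → Fin J → ℝ) : Prop :=
  (∀ i j, 0 ≤ q i j) ∧ ∀ j, ∑ i, q i j = Q j

/-- The effective resource of user `i` under demand matrix `q`. -/
def effRes {I J : ℕ} (c q : Fin I → Fin J → ℝ) (i : Fin I) : ℝ :=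
  ∑ j, q i j * c i j

/-- The social welfare of a demand matrix. -/
def welfare {I J : ℕ} (u : Fin I → ℝ → ℝ) (c q : Fin I → Fin J → ℝ) : ℝ :=
  ∑ i, u i (effRes c q i)

/-- The channel quality offsets are generic: no cycle of distinct users and
distinct providers has offset-ratio product equal to one. -/
def Generic {I J : ℕ} (c : Fin I → Fin J → ℝ) : Prop :=
  ∀ (n : ℕ) (_hn : 2 ≤ n) (ii : Fin n → Fin I) (jj : Fin n → Fin J),
    Function.Injective ii → Function.Injective jj →
    ∏ k : Fin n, c (ii k) (jj (k - ⟨1, by omega⟩)) / c (ii k) (jj k) ≠ 1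

/-!
The feasible set is compact, so a maximizer exists. Strict concavity forces all maximizers to
give every user the same effective resource `xᵢ`, hence the same marginal utilities
`λᵢ = uᵢ'(xᵢ) > 0`, and first-order optimality says that an edge `(i, j)` carrying demand in some
maximizer maximizes `λᵢ cᵢⱼ` over the column `j`. If `q ≠ q'` are maximizers, then `q' - q` has
zero column sums and zero `c`-weighted row sums, so its support contains an alternating cycle of
distinct users and providers. Consecutive edges of the cycle share a column, so their values of
`λᵢ cᵢⱼ` agree and the offset ratios along the cycle telescope to `1`, contradicting genericity.
-/

open Function Set

section Cycle

variable {α β : Type*}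

def HasCycle (E : α → β → Prop) : Prop :=
  ∃ (n : ℕ) (hn : 2 ≤ n) (ii : Fin n → α) (jj : Fin n → β), Injective ii ∧ Injective jj ∧
    (∀ k, E (ii k) (jj k)) ∧ ∀ k, E (ii k) (jj (k - ⟨1, by omega⟩))

theorem exists_alternating_walk {E : α → β → Prop}
    (hrow : ∀ i j, E i j → ∃ j', j' ≠ j ∧ E i j') (hcol : ∀ i j, E i j → ∃ i', i' ≠ i ∧ E i' j)
    {i₀ : α} {j₀ : β} (h₀ : E i₀ j₀) :
    ∃ (f : ℕ → α) (g : ℕ → β), (∀ t, E (f t) (g t)) ∧ (∀ t, E (f (t + 1)) (g t)) ∧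
      (∀ t, f (t + 1) ≠ f t) ∧ ∀ t, g (t + 1) ≠ g t := by
  have hstep (p : {p : α × β // E p.1 p.2}) : ∃ p' : {p : α × β // E p.1 p.2},
      p'.1.1 ≠ p.1.1 ∧ p'.1.2 ≠ p.1.2 ∧ E p'.1.1 p.1.2 := by
    obtain ⟨i', hi', hi'j⟩ := hcol _ _ p.2
    obtain ⟨j', hj', hi'j'⟩ := hrow _ _ hi'j
    exact ⟨⟨(i', j'), hi'j'⟩, hi', hj', hi'j⟩
  choose next hnext₁ hnext₂ hnext using hstep
  let w (t : ℕ) := next^[t] ⟨(i₀, j₀), h₀⟩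
  have hw (t : ℕ) : w (t + 1) = next (w t) := iterate_succ_apply' ..
  refine ⟨fun t => (w t).1.1, fun t => (w t).1.2, fun t => (w t).2, fun t => ?_, fun t => ?_,
    fun t => ?_⟩ <;> simp only [hw]
  exacts [hnext _, hnext₁ _, hnext₂ _]

theorem exists_minimal_recurrence [Finite α] (f : ℕ → α) (g : ℕ → β) :
    ∃ n, 0 < n ∧ (∃ s, f (s + n) = f s ∨ g (s + n) = g s) ∧
      ∀ m, 0 < m → m < n → ∀ t, f (t + m) ≠ f t ∧ g (t + m) ≠ g t := by
  classical
  have hex : ∃ n, 0 < n ∧ ∃ s, f (s + n) = f s ∨ g (s + n) = g s := by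
    obtain ⟨a, b, hab, hfab⟩ := Finite.exists_ne_map_eq_of_infinite f
    rcases hab.lt_or_gt with h | h
    · exact ⟨b - a, by omega, a, .inl (by rw [Nat.add_sub_cancel' h.le, hfab])⟩
    · exact ⟨a - b, by omega, b, .inl (by rw [Nat.add_sub_cancel' h.le, hfab])⟩
  refine ⟨Nat.find hex, (Nat.find_spec hex).1, (Nat.find_spec hex).2, fun m hm hmn t => ?_⟩
  have := Nat.find_min hex hmn
  push Not at this
  exact this hm t

theorem injective_of_forall_add_ne {f : ℕ → α} {n : ℕ}
    (h : ∀ m, 0 < m → m < n → ∀ t, f (t + m) ≠ f t) (s : ℕ) :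
    Injective fun k : Fin n => f (s + k) := by
  suffices ∀ a b : Fin n, a < b → f (s + a) ≠ f (s + b) by
    intro a b hab
    by_contra hne
    rcases lt_or_gt_of_ne hne with h | h
    exacts [this a b h hab, this b a h hab.symm]
  intro a b hab
  have := h (b - a) (by omega) (by omega) (s + a)
  rwa [show s + a + (b - a) = s + b by omega, ne_comm] at this

theorem hasCycle_of_window {E : α → β → Prop} {f : ℕ → α} {g : ℕ → β}
    (hE : ∀ t, E (f t) (g t)) (hcross : ∀ t, E (f (t + 1)) (g t)) {n : ℕ} (hn : 2 ≤ n)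
    (hgap : ∀ m, 0 < m → m < n → ∀ t, f (t + m) ≠ f t ∧ g (t + m) ≠ g t)
    {s : ℕ} (hclose : E (f s) (g (s + (n - 1)))) : HasCycle E := by
  refine ⟨n, hn, fun k => f (s + k), fun k => g (s + k),
    injective_of_forall_add_ne (fun m h₀ h₁ t => (hgap m h₀ h₁ t).1) s,
    injective_of_forall_add_ne (fun m h₀ h₁ t => (hgap m h₀ h₁ t).2) s, fun k => hE _,
    fun ⟨k, hk⟩ => ?_⟩
  dsimp only
  rcases k with _ | k
  · rwa [Fin.coe_sub_iff_lt.2 (by simp)]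
  · rw [Fin.coe_sub_iff_le.2 (by simp)]
    simpa [← add_assoc] using hcross (s + k)

theorem hasCycle_of_forall_exists_ne [Finite α] {E : α → β → Prop}
    (hrow : ∀ i j, E i j → ∃ j', j' ≠ j ∧ E i j') (hcol : ∀ i j, E i j → ∃ i', i' ≠ i ∧ E i' j)
    {i₀ : α} {j₀ : β} (h₀ : E i₀ j₀) : HasCycle E := by
  obtain ⟨f, g, hE, hcross, hf, hg⟩ := exists_alternating_walk hrow hcol h₀
  obtain ⟨n, hn, ⟨s, hs⟩, hgap⟩ := exists_minimal_recurrence f g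
  have hn2 : 2 ≤ n := by
    by_contra! hn1
    obtain rfl : n = 1 := by omega
    exact hs.elim (hf s) (hg s)
  rcases hs with hs | hs
  · refine hasCycle_of_window hE hcross hn2 hgap (s := s) ?_
    simpa [show s + (n - 1) + 1 = s + n by omega, hs] using hcross (s + (n - 1))
  · -- a repeated provider closes the cycle that starts one step later
    refine hasCycle_of_window hE hcross hn2 hgap (s := s + 1) ?_
    simpa [show s + 1 + (n - 1) = s + n by omega, hs] using hcross s

theorem exists_ne_ne_zero_of_sum_eq_zero {M : Type*} [AddCommMonoid M] [Fintype α] {f : α → M} (hf : ∑ a, f a = 0) {a : α}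
    (ha : f a ≠ 0) : ∃ b, b ≠ a ∧ f b ≠ 0 := by
  by_contra! h
  exact ha (by rwa [Finset.sum_eq_single a (fun b _ hb => h b hb) (by simp)] at hf)

theorem hasCycle_ne_zero_of_sums_eq_zero {K : Type*} [Field K] [Fintype α] [Fintype β]
    {d c : α → β → K} (hc : ∀ i j, c i j ≠ 0)
    (hrow : ∀ i, ∑ j, d i j * c i j = 0) (hcol : ∀ j, ∑ i, d i j = 0) (hd : d ≠ 0) :
    HasCycle fun i j => d i j ≠ 0 := by
  classical
  obtain ⟨i₀, j₀, h₀⟩ : ∃ i j, d i j ≠ 0 := by simpa [funext_iff] using hd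
  refine hasCycle_of_forall_exists_ne (fun i j hij => ?_)
    (fun i j hij => exists_ne_ne_zero_of_sum_eq_zero (hcol j) hij) h₀
  simpa [hc] using exists_ne_ne_zero_of_sum_eq_zero (hrow i) (mul_ne_zero hij (hc i j))

theorem prod_div_eq_one_of_cycle {K : Type*} [Field K] {n : ℕ} (hn : 2 ≤ n) {ii : Fin n → α} {jj : Fin n → β}
    {c : α → β → K} {lam : α → K} (hlam : ∀ i, lam i ≠ 0) (hc : ∀ i j, c i j ≠ 0)
    (hbal : ∀ k, lam (ii k) * c (ii k) (jj (k - ⟨1, by omega⟩)) =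
      lam (ii (k - ⟨1, by omega⟩)) * c (ii (k - ⟨1, by omega⟩)) (jj (k - ⟨1, by omega⟩))) :
    ∏ k : Fin n, c (ii k) (jj (k - ⟨1, by omega⟩)) / c (ii k) (jj k) = 1 := by
  set w : Fin n → K := fun k => lam (ii k) * c (ii k) (jj k)
  have hw : ∀ k, w k ≠ 0 := fun k => mul_ne_zero (hlam _) (hc _ _)
  calc ∏ k : Fin n, c (ii k) (jj (k - ⟨1, by omega⟩)) / c (ii k) (jj k)
      = ∏ k : Fin n, w (k - ⟨1, by omega⟩) / w k := by
        refine Finset.prod_congr rfl fun k _ => ?_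
        simp only [w]
        rw [← hbal, mul_div_mul_left _ _ (hlam _)]
    _ = 1 := by
        have hshift : ∏ k : Fin n, w (k - ⟨1, by omega⟩) = ∏ k, w k := by
          have : NeZero n := ⟨by omega⟩
          exact Fintype.prod_equiv (Equiv.subRight ⟨1, by omega⟩) _ w fun k => rfl
        rw [Finset.prod_div_distrib, hshift,
          div_self (Finset.prod_ne_zero_iff.2 fun k _ => hw k)]

end Cycle

theorem deriv_pos_of_strictMono_of_concaveOn {f : ℝ → ℝ} (hmono : StrictMono f)
    (hconc : ConcaveOn ℝ univ f) {x : ℝ} (hdiff : DifferentiableAt ℝ f x) : 0 < deriv f x :=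
  calc 0 < slope f x (x + 1) := by
        simpa [slope_def_field] using hmono (lt_add_one x)
    _ ≤ deriv f x := hconc.slope_le_deriv (mem_univ _) (mem_univ _) (lt_add_one x) hdiff

theorem HasDerivAt.nonpos_of_isMaxOn_Icc {φ : ℝ → ℝ} {D a b : ℝ} (hφ : HasDerivAt φ D a)
    (hmax : IsMaxOn φ (Icc a b) a) (hab : a < b) : D ≤ 0 := by
  have hcone : b - a ∈ posTangentConeAt (Icc a b) a :=
    sub_mem_posTangentConeAt_of_segment_subset (segment_eq_Icc hab.le).subset
  have := hmax.localize.hasFDerivWithinAt_nonpos hφ.hasFDerivAt.hasFDerivWithinAt hcone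
  simp only [ContinuousLinearMap.toSpanSingleton_apply, smul_eq_mul] at this
  exact nonpos_of_mul_nonpos_right this (sub_pos.2 hab)

section Welfare

variable {I J : ℕ} {Q : Fin J → ℝ} {u : Fin I → ℝ → ℝ} {c q r : Fin I → Fin J → ℝ}

theorem convex_setOf_feasible : Convex ℝ {q : Fin I → Fin J → ℝ | Feasible Q q} := by
  rintro q ⟨hq₀, hq⟩ r ⟨hr₀, hr⟩ a b ha hb hab
  refine ⟨fun i j => ?_, fun j => ?_⟩
  · simp only [Pi.add_apply, Pi.smul_apply, smul_eq_mul]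
    have := hq₀ i j; have := hr₀ i j; positivity
  · simp [Finset.sum_add_distrib, ← Finset.mul_sum, hq, hr, ← add_mul, hab]

theorem isCompact_setOf_feasible : IsCompact {q : Fin I → Fin J → ℝ | Feasible Q q} := by
  refine (isCompact_univ_pi fun _ => isCompact_univ_pi fun j =>
    isCompact_Icc (a := 0) (b := Q j)).of_isClosed_subset ?_ ?_
  · simp only [Feasible, ofPred_and, ofPred_forall]
    exact (isClosed_iInter fun i => isClosed_iInter fun j =>
      isClosed_le (by fun_prop) (by fun_prop)).inter
      (isClosed_iInter fun j => isClosed_eq (by fun_prop) (by fun_prop))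
  · rintro q ⟨hq₀, hq⟩
    simp only [mem_univ_pi, mem_Icc]
    exact fun i j =>
      ⟨hq₀ i j, hq j ▸ Finset.single_le_sum (fun i' _ => hq₀ i' j) (Finset.mem_univ i)⟩

theorem feasible_nonempty (hI : 0 < I) (hQ : ∀ j, 0 ≤ Q j) :
    {q : Fin I → Fin J → ℝ | Feasible Q q}.Nonempty := by
  refine ⟨fun _ j => Q j / I, fun _ j => by have := hQ j; positivity, fun j => ?_⟩
  simp [field]

theorem continuous_welfare (hu : ∀ i, Continuous (u i)) : Continuous (welfare u c) := by
  unfold welfare effRes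
  fun_prop

theorem effRes_smul_add_smul (a b : ℝ) (i : Fin I) :
    effRes c (a • q + b • r) i = a * effRes c q i + b * effRes c r i := by
  simp only [effRes, Pi.add_apply, Pi.smul_apply, smul_eq_mul, Finset.mul_sum,
    ← Finset.sum_add_distrib]
  exact Finset.sum_congr rfl fun j _ => by ring

theorem sum_deriv_mul_sub_nonpos_of_isMaxOn (hu : ∀ i, Differentiable ℝ (u i))
    (hmax : IsMaxOn (welfare u c) {q | Feasible Q q} q) (hq : Feasible Q q) (hr : Feasible Q r) :
    ∑ i, deriv (u i) (effRes c q i) * (effRes c r i - effRes c q i) ≤ 0 := by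
  let φ : ℝ → ℝ := fun t => welfare u c ((1 - t) • q + t • r)
  have hφ : HasDerivAt φ (∑ i, deriv (u i) (effRes c q i) * (effRes c r i - effRes c q i)) 0 := by
    simp only [φ, welfare, effRes_smul_add_smul]
    refine HasDerivAt.fun_sum fun i _ => ?_
    have hline : HasDerivAt (fun t : ℝ => (1 - t) * effRes c q i + t * effRes c r i)
        (effRes c r i - effRes c q i) 0 :=
      ((((hasDerivAt_id (0 : ℝ)).const_sub 1).mul_const _).add
        ((hasDerivAt_id (0 : ℝ)).mul_const _)).congr_deriv (by ring)
    simpa [Function.comp_def] using (hu i _).hasDerivAt.comp 0 hline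
  refine hφ.nonpos_of_isMaxOn_Icc (fun t ht => ?_) one_pos
  simpa [φ] using hmax (convex_setOf_feasible hq hr (by linarith [ht.2]) ht.1 (by ring))

theorem deriv_mul_le_of_isMaxOn (hu : ∀ i, Differentiable ℝ (u i))
    (hmax : IsMaxOn (welfare u c) {q | Feasible Q q} q) (hq : Feasible Q q) {i : Fin I} {j : Fin J}
    (hij : 0 < q i j) (i' : Fin I) :
    deriv (u i') (effRes c q i') * c i' j ≤ deriv (u i) (effRes c q i) * c i j := by
  classical
  -- move the whole demand of `i` at provider `j` over to `i'`
  let v : Fin I → Fin J → ℝ := fun a b =>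
    if b = j then (if a = i' then q i j else 0) - (if a = i then q i j else 0) else 0
  have hv : Feasible Q (q + v) := by
    refine ⟨fun a b => ?_, fun b => ?_⟩
    · have := hq.1 a b
      simp only [v, Pi.add_apply]
      split_ifs <;> subst_vars <;> linarith
    · simp [v, Finset.sum_add_distrib, hq.2]
  have heff (a : Fin I) : effRes c (q + v) a - effRes c q a =
      (if a = i' then q i j * c a j else 0) - (if a = i then q i j * c a j else 0) := by
    simp [v, effRes, Finset.sum_add_distrib, add_mul, sub_mul]
  have hfirst := sum_deriv_mul_sub_nonpos_of_isMaxOn hu hmax hq hv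
  simp only [heff, mul_sub, mul_ite, mul_zero, Finset.sum_sub_distrib, Finset.sum_ite_eq',
    Finset.mem_univ, if_true] at hfirst
  exact le_of_mul_le_mul_left (by linarith) hij

theorem lt_welfare_smul_add_smul (hu : ∀ i, StrictConcaveOn ℝ univ (u i)) {i₀ : Fin I}
    (hi₀ : effRes c q i₀ ≠ effRes c r i₀) {a b : ℝ} (ha : 0 < a) (hb : 0 < b) (hab : a + b = 1) :
    a * welfare u c q + b * welfare u c r < welfare u c (a • q + b • r) := by
  simp only [welfare, Finset.mul_sum, ← Finset.sum_add_distrib, effRes_smul_add_smul]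
  refine Finset.sum_lt_sum (fun i _ => ?_) ⟨i₀, Finset.mem_univ _, ?_⟩
  · exact (hu i).concaveOn.2 (mem_univ _) (mem_univ _) ha.le hb.le hab
  · exact (hu i₀).2 (mem_univ _) (mem_univ _) hi₀ ha hb hab

theorem effRes_eq_of_isMaxOn (hu : ∀ i, StrictConcaveOn ℝ univ (u i))
    (hq : Feasible Q q) (hr : Feasible Q r) (hqmax : IsMaxOn (welfare u c) {q | Feasible Q q} q)
    (hrmax : IsMaxOn (welfare u c) {q | Feasible Q q} r) (i : Fin I) :
    effRes c r i = effRes c q i := by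
  by_contra hne
  have hmid := lt_welfare_smul_add_smul hu hne one_half_pos one_half_pos (add_halves 1)
  have hle : welfare u c ((1 / 2 : ℝ) • r + (1 / 2 : ℝ) • q) ≤ welfare u c q :=
    hqmax (convex_setOf_feasible hr hq one_half_pos.le one_half_pos.le (add_halves 1))
  linarith [show welfare u c q ≤ welfare u c r from hrmax hq]

end Welfare

theorem eq_of_isMaxOn_welfare_of_generic {I J : ℕ} {Q : Fin J → ℝ} {u : Fin I → ℝ → ℝ}
    {c q r : Fin I → Fin J → ℝ} (hu_diff : ∀ i, Differentiable ℝ (u i))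
    (hu_mono : ∀ i, StrictMono (u i)) (hu_conc : ∀ i, StrictConcaveOn ℝ univ (u i))
    (hc : ∀ i j, 0 < c i j) (hgen : Generic c) (hq : Feasible Q q) (hr : Feasible Q r)
    (hqmax : IsMaxOn (welfare u c) {q | Feasible Q q} q)
    (hrmax : IsMaxOn (welfare u c) {q | Feasible Q q} r) : r = q := by
  set lam : Fin I → ℝ := fun i => deriv (u i) (effRes c q i)
  have hlam (i : Fin I) : 0 < lam i :=
    deriv_pos_of_strictMono_of_concaveOn (hu_mono i) (hu_conc i).concaveOn (hu_diff i _)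
  have hx := effRes_eq_of_isMaxOn hu_conc hq hr hqmax hrmax
  have htight {i j} (hij : r i j - q i j ≠ 0) (i' : Fin I) : lam i' * c i' j ≤ lam i * c i j := by
    rcases (hq.1 i j).lt_or_eq with hqij | hqij
    · exact deriv_mul_le_of_isMaxOn hu_diff hqmax hq hqij i'
    · have hrij : 0 < r i j := (hr.1 i j).lt_of_ne' (by simpa [← hqij] using hij)
      simpa only [lam, hx] using deriv_mul_le_of_isMaxOn hu_diff hrmax hr hrij i'
  by_contra hne
  obtain ⟨n, hn, ii, jj, hii, hjj, hE, hE'⟩ := hasCycle_ne_zero_of_sums_eq_zero (d := r - q)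
    (fun i j => (hc i j).ne') (fun i => by simpa [sub_mul, effRes] using sub_eq_zero.2 (hx i))
    (fun j => by simp [Finset.sum_sub_distrib, hq.2, hr.2]) (sub_ne_zero.2 hne)
  exact hgen n hn ii jj hii hjj <| prod_div_eq_one_of_cycle hn (fun i => (hlam i).ne')
    (fun i j => (hc i j).ne') fun k => le_antisymm (htight (hE _) _) (htight (hE' k) _)

theorem swo_unique_maximizer_of_generic_general
    (I J : ℕ) (hI : 0 < I)
    (u : Fin I → ℝ → ℝ)
    (hu_diff : ∀ i, Differentiable ℝ (u i))
    (hu_mono : ∀ i, StrictMono (u i))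
    (hu_conc : ∀ i, StrictConcaveOn ℝ Set.univ (u i))
    (Q : Fin J → ℝ) (hQ : ∀ j, 0 < Q j)
    (c : Fin I → Fin J → ℝ) (hc : ∀ i j, 0 < c i j)
    (hgen : Generic c) :
    ∃! q : Fin I → Fin J → ℝ, Feasible Q q ∧
      ∀ q' : Fin I → Fin J → ℝ, Feasible Q q' → welfare u c q' ≤ welfare u c q := by
  obtain ⟨q, hq, hqmax⟩ := isCompact_setOf_feasible.exists_isMaxOn
    (feasible_nonempty hI fun j => (hQ j).le)
    (continuous_welfare (c := c) fun i => (hu_diff i).continuous).continuousOn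
  exact ⟨q, ⟨hq, hqmax⟩, fun r ⟨hr, hrmax⟩ =>
    eq_of_isMaxOn_welfare_of_generic hu_diff hu_mono hu_conc hc hgen hq hr hqmax hrmax⟩

/-- If the channel quality offsets are generic, the social
welfare optimization problem SWO has a unique optimal demand matrix. -/
theorem swo_unique_maximizer_of_generic
    (I J : ℕ) (hI : 0 < I) (hJ : 0 < J)
    (u : Fin I → ℝ → ℝ)
    (hu_diff : ∀ i, Differentiable ℝ (u i))
    (hu_mono : ∀ i, StrictMono (u i))
    (hu_conc : ∀ i, StrictConcaveOn ℝ Set.univ (u i))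
    (Q : Fin J → ℝ) (hQ : ∀ j, 0 < Q j)
    (c : Fin I → Fin J → ℝ) (hc : ∀ i j, 0 < c i j)
    (hgen : Generic c) :
    ∃! q : Fin I → Fin J → ℝ, Feasible Q q ∧
      ∀ q' : Fin I → Fin J → ℝ, Feasible Q q' → welfare u c q' ≤ welfare u c q :=
  swo_unique_maximizer_of_generic_general I J hI u hu_diff hu_mono hu_conc Q hQ c hc hgen
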